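/- Let x be a real number that has a signed digit representation and suppose 0 ≤ x. Then √x has a signed digit representation. -/

import Mathlib

/-- A real number has a signed digit representation if it is the sum of a
series of digits in {-1, 0, 1} weighted by powers of 1/2. -/
def HasSDR (x : ℝ) : Prop :=
  ∃ d : ℕ → ℤ, (∀ i, d i = -1 ∨ d i = 0 ∨ d i = 1) ∧
    x = ∑' i : ℕ, (d i : ℝ) / 2 ^ (i + 1)

/-!
A signed digit series is dominated termwise by `∑ 1 / 2 ^ (i + 1) = 1`, so every number with a
signed digit representation lies in `[-1, 1]`. Conversely every `x ∈ [-1, 1]` has one: take the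
digit `d ∈ {-1, 0, 1}` nearest to `x` (ties away from `0`) and continue with `2 x - d`, which again
lies in `[-1, 1]`. Hence having a signed digit representation means `|x| ≤ 1`, a condition
preserved by `√`.
-/

open Filter Topology

lemma norm_div_two_pow_succ_le {c : ℝ} (hc : |c| ≤ 1) (i : ℕ) :
    ‖c / 2 ^ (i + 1)‖ ≤ 1 / 2 / 2 ^ i := by
  rw [Real.norm_eq_abs, abs_div, abs_pow, abs_two, pow_succ, div_div, mul_comm]
  gcongr

lemma abs_tsum_div_two_pow_succ_le_one {c : ℕ → ℝ} (hc : ∀ i, |c i| ≤ 1) :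
    |∑' i, c i / 2 ^ (i + 1)| ≤ 1 :=
  tsum_of_norm_bounded (hasSum_geometric_two' 1) fun i => norm_div_two_pow_succ_le (hc i) i

lemma HasSDR.abs_le_one {x : ℝ} (hx : HasSDR x) : |x| ≤ 1 := by
  obtain ⟨d, hd, rfl⟩ := hx
  exact abs_tsum_div_two_pow_succ_le_one fun i => by rcases hd i with h | h | h <;> simp [h]

namespace SignedDigit

noncomputable def greedyDigit (r : ℝ) : ℤ :=
  if 1 / 2 ≤ r then 1 else if r ≤ -(1 / 2) then -1 else 0

lemma greedyDigit_mem (r : ℝ) : greedyDigit r = -1 ∨ greedyDigit r = 0 ∨ greedyDigit r = 1 := by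
  unfold greedyDigit
  split_ifs <;> simp

lemma abs_greedyDigit_le_one (r : ℝ) : |(greedyDigit r : ℝ)| ≤ 1 := by
  rcases greedyDigit_mem r with h | h | h <;> simp [h]

noncomputable def greedyRemainder (x : ℝ) : ℕ → ℝ
  | 0 => x
  | n + 1 => 2 * greedyRemainder x n - greedyDigit (greedyRemainder x n)

lemma abs_two_mul_sub_greedyDigit_le_one {r : ℝ} (hr : |r| ≤ 1) :
    |2 * r - greedyDigit r| ≤ 1 := by
  rw [abs_le] at hr ⊢
  unfold greedyDigit
  split_ifs <;> push_cast <;> constructor <;> linarith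

lemma abs_greedyRemainder_le_one {x : ℝ} (hx : |x| ≤ 1) (n : ℕ) : |greedyRemainder x n| ≤ 1 := by
  induction n with
  | zero => exact hx
  | succ n ih => exact abs_two_mul_sub_greedyDigit_le_one ih

lemma sum_greedyDigit_div_two_pow_succ (x : ℝ) (n : ℕ) :
    ∑ i ∈ Finset.range n, (greedyDigit (greedyRemainder x i) : ℝ) / 2 ^ (i + 1)
      = x - greedyRemainder x n / 2 ^ n := by
  induction n with
  | zero => simp [greedyRemainder]
  | succ n ih =>
    rw [Finset.sum_range_succ, ih, greedyRemainder]
    field_simp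
    ring

lemma hasSum_greedyDigit {x : ℝ} (hx : |x| ≤ 1) :
    HasSum (fun i => (greedyDigit (greedyRemainder x i) : ℝ) / 2 ^ (i + 1)) x := by
  have hbound := fun i => norm_div_two_pow_succ_le (abs_greedyDigit_le_one (greedyRemainder x i)) i
  rw [hasSum_iff_tendsto_nat_of_summable_norm
    (Summable.of_nonneg_of_le (fun _ => norm_nonneg _) hbound (summable_geometric_two' 1))]
  simp_rw [sum_greedyDigit_div_two_pow_succ]
  have hremainder : Tendsto (fun n => greedyRemainder x n / 2 ^ n) atTop (𝓝 0) := by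
    refine squeeze_zero_norm (fun n => ?_) (tendsto_pow_atTop_nhds_zero_of_lt_one
      (by norm_num : (0 : ℝ) ≤ 1 / 2) (by norm_num))
    rw [Real.norm_eq_abs, abs_div, abs_pow, abs_two, div_pow, one_pow]
    gcongr
    exact abs_greedyRemainder_le_one hx n
  simpa using tendsto_const_nhds.sub hremainder

end SignedDigit

lemma hasSDR_of_abs_le_one {x : ℝ} (hx : |x| ≤ 1) : HasSDR x :=
  ⟨_, fun _ => SignedDigit.greedyDigit_mem _, (SignedDigit.hasSum_greedyDigit hx).tsum_eq.symm⟩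

theorem hasSDR_iff_abs_le_one {x : ℝ} : HasSDR x ↔ |x| ≤ 1 :=
  ⟨HasSDR.abs_le_one, hasSDR_of_abs_le_one⟩

theorem sdr_sqrt_general (x : ℝ) (hx : HasSDR x) :
    HasSDR (Real.sqrt x) := by
  rw [hasSDR_iff_abs_le_one] at hx ⊢
  rw [abs_of_nonneg (Real.sqrt_nonneg x), Real.sqrt_le_one]
  exact (abs_le.mp hx).2

theorem sdr_sqrt (x : ℝ) (hx : HasSDR x) (hpos : 0 ≤ x) :
    HasSDR (Real.sqrt x) :=
  sdr_sqrt_general x hx
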